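/- arXiv:1206.5822 — 4 statements merged into one kernel-verified Lean document; each statement's English description precedes it below -/
import Mathlib

section
/- Let R1, R2 ⊆ [d_A]×[d_B] be nonempty regions of a d_A×d_B grid. Let {φ_i}_{i=1}^{|R1|} be an orthonormal basis of the subspace of ℂ^{d_A}⊗ℂ^{d_B} spanned by the standard product basis vectors e_r⊗e_c with (r,c) ∈ R1, and let {ψ_j}_{j=1}^{|R2|} be an orthonormal basis of the corresponding subspace for R2. Then for any complex matrices a ∈ M_{d_A}(ℂ) and b ∈ M_{d_B}(ℂ): √(|R1|·|R2|) · max_{i,j} |⟨φ_i, (a⊗b) ψ_j⟩| ≥ max over (r1,c1) ∈ R1 and (r2,c2) ∈ R2 of |a_{r1 r2}|·|b_{c1 c2}|. -/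
open Matrix Kronecker

section aux

lemma onb_complete {d : Type*} [Fintype d] [DecidableEq d] (R : Finset d)
    (φ : Fin R.card → d → ℂ)
    (hon : ∀ i j, star (φ i) ⬝ᵥ φ j = if i = j then 1 else 0)
    (hsupp : ∀ i, ∀ p ∉ R, φ i p = 0) :
    ∀ p ∈ R, ∀ x, ∑ i, (starRingEnd ℂ) (φ i p) * φ i x = if x = p then 1 else 0 := by
  classical
  set e : Fin R.card ≃ R := R.equivFin.symm with he
  set V : Matrix (Fin R.card) (Fin R.card) ℂ := fun i k => φ i (e k) with hV
  have hVV : V * Vᴴ = 1 := by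
    ext i j
    have h := hon j i
    simp only [dotProduct, Pi.star_apply, RCLike.star_def] at h
    have hr : ∑ x, (starRingEnd ℂ) (φ j x) * φ i x
        = ∑ x ∈ R, (starRingEnd ℂ) (φ j x) * φ i x := by
      refine (Finset.sum_subset (Finset.subset_univ R) ?_).symm
      intro x _ hx
      rw [hsupp i x hx, mul_zero]
    have hre : ∑ x ∈ R, (starRingEnd ℂ) (φ j x) * φ i x
        = ∑ k, (starRingEnd ℂ) (φ j (e k)) * φ i (e k) := by
      rw [← Finset.sum_attach R (fun x => (starRingEnd ℂ) (φ j x) * φ i x)]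
      exact (Fintype.sum_equiv R.equivFin.symm _ _ (fun k => rfl)).symm
    rw [hr, hre] at h
    rw [Matrix.mul_apply]
    simp only [conjTranspose_apply, Matrix.one_apply]
    calc ∑ k, V i k * star (V j k) = ∑ k, (starRingEnd ℂ) (φ j (e k)) * φ i (e k) := by
          apply Finset.sum_congr rfl; intro k _; simp [hV, RCLike.star_def]; ring
      _ = if j = i then 1 else 0 := h
      _ = if i = j then 1 else 0 := by simp [eq_comm]
  have hVV' : Vᴴ * V = 1 := mul_eq_one_comm.mp hVV
  intro p hp x
  by_cases hx : x ∈ R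
  · have := congrFun (congrFun hVV' (R.equivFin ⟨p, hp⟩)) (R.equivFin ⟨x, hx⟩)
    rw [Matrix.mul_apply] at this
    simp only [conjTranspose_apply, Matrix.one_apply] at this
    have hep : e (R.equivFin ⟨p, hp⟩) = ⟨p, hp⟩ := R.equivFin.symm_apply_apply _
    have hex : e (R.equivFin ⟨x, hx⟩) = ⟨x, hx⟩ := R.equivFin.symm_apply_apply _
    calc ∑ i, (starRingEnd ℂ) (φ i p) * φ i x
        = ∑ i, star (V i (R.equivFin ⟨p, hp⟩)) * V i (R.equivFin ⟨x, hx⟩) := by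
          apply Finset.sum_congr rfl; intro i _
          simp [hV, hep, hex, RCLike.star_def]
      _ = if R.equivFin ⟨p, hp⟩ = R.equivFin ⟨x, hx⟩ then 1 else 0 := this
      _ = if x = p then 1 else 0 := by
          simp only [EmbeddingLike.apply_eq_iff_eq, Subtype.mk.injEq]
          exact if_congr ⟨fun h => h.symm, fun h => h.symm⟩ rfl rfl
  · have : x ≠ p := fun h => hx (h ▸ hp)
    rw [if_neg this]
    apply Finset.sum_eq_zero
    intro i _
    rw [hsupp i x hx, mul_zero]

lemma onb_normsq {d : Type*} [Fintype d] [DecidableEq d] (R : Finset d)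
    (φ : Fin R.card → d → ℂ)
    (hkey : ∀ p ∈ R, ∀ x, ∑ i, (starRingEnd ℂ) (φ i p) * φ i x = if x = p then 1 else 0)
    {p : d} (hp : p ∈ R) : ∑ i, ‖φ i p‖ ^ 2 = 1 := by
  have h := hkey p hp p
  rw [if_pos rfl] at h
  have : ((∑ i, ‖φ i p‖ ^ 2 : ℝ) : ℂ) = 1 := by
    push_cast
    rw [← h]
    apply Finset.sum_congr rfl
    intro i _
    rw [mul_comm, Complex.mul_conj']
  exact_mod_cast this

lemma onb_sum_norm_le {d : Type*} [Fintype d] [DecidableEq d] (R : Finset d)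
    (φ : Fin R.card → d → ℂ)
    (hkey : ∀ p ∈ R, ∀ x, ∑ i, (starRingEnd ℂ) (φ i p) * φ i x = if x = p then 1 else 0)
    {p : d} (hp : p ∈ R) : ∑ i, ‖φ i p‖ ≤ Real.sqrt R.card := by
  have h1 : (∑ i, ‖φ i p‖) ^ 2 ≤ (R.card : ℝ) := by
    have := sq_sum_le_card_mul_sum_sq (s := (Finset.univ : Finset (Fin R.card)))
      (f := fun i => ‖φ i p‖)
    simp only [Finset.card_univ, Fintype.card_fin] at this
    rw [onb_normsq R φ hkey hp, mul_one] at this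
    exact this
  have h2 : 0 ≤ ∑ i, ‖φ i p‖ := Finset.sum_nonneg fun i _ => norm_nonneg _
  nlinarith [Real.sq_sqrt (by positivity : (0:ℝ) ≤ (R.card : ℝ)),
    Real.sqrt_nonneg (R.card : ℝ)]

lemma sum_swap4 {M : Type*} [AddCommMonoid M] {α β γ δ : Type*}
    [Fintype α] [Fintype β] [Fintype γ] [Fintype δ] (f : α → β → γ → δ → M) :
    ∑ x : α, ∑ y : β, ∑ i : γ, ∑ j : δ, f x y i j
      = ∑ i : γ, ∑ j : δ, ∑ x : α, ∑ y : β, f x y i j := by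
  calc ∑ x : α, ∑ y : β, ∑ i : γ, ∑ j : δ, f x y i j
      = ∑ x : α, ∑ i : γ, ∑ y : β, ∑ j : δ, f x y i j :=
        Finset.sum_congr rfl fun x _ => Finset.sum_comm
    _ = ∑ i : γ, ∑ x : α, ∑ y : β, ∑ j : δ, f x y i j := Finset.sum_comm
    _ = ∑ i : γ, ∑ x : α, ∑ j : δ, ∑ y : β, f x y i j :=
        Finset.sum_congr rfl fun i _ => Finset.sum_congr rfl fun x _ => Finset.sum_comm
    _ = ∑ i : γ, ∑ j : δ, ∑ x : α, ∑ y : β, f x y i j :=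
        Finset.sum_congr rfl fun i _ => Finset.sum_comm

end aux

/-- For nonempty regions `R1, R2` of the `d_A × d_B` grid, orthonormal bases
`φ` (of the coordinate subspace spanned by the standard product basis vectors indexed by `R1`)
and `ψ` (of the one for `R2`), and any matrices `a, b`, one has
`√(|R1|·|R2|) · max_{i,j} |⟨φ i, (a ⊗ b) ψ j⟩| ≥ max_{(r1,c1)∈R1, (r2,c2)∈R2} |a_{r1 r2}|·|b_{c1 c2}|`. -/
theorem stmt1 {dA dB : ℕ} (R1 R2 : Finset (Fin dA × Fin dB))
    (hR1 : R1.Nonempty) (hR2 : R2.Nonempty)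
    (φ : Fin R1.card → Fin dA × Fin dB → ℂ) (ψ : Fin R2.card → Fin dA × Fin dB → ℂ)
    (hφon : ∀ i j, star (φ i) ⬝ᵥ φ j = if i = j then 1 else 0)
    (hψon : ∀ i j, star (ψ i) ⬝ᵥ ψ j = if i = j then 1 else 0)
    (hφsupp : ∀ i, ∀ p ∉ R1, φ i p = 0)
    (hψsupp : ∀ j, ∀ p ∉ R2, ψ j p = 0)
    (a : Matrix (Fin dA) (Fin dA) ℂ) (b : Matrix (Fin dB) (Fin dB) ℂ) :
    Real.sqrt ((R1.card : ℝ) * R2.card) *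
        (⨆ q : Fin R1.card × Fin R2.card, ‖star (φ q.1) ⬝ᵥ (a ⊗ₖ b).mulVec (ψ q.2)‖) ≥
      ⨆ q : R1 × R2,
        ‖a (q.1 : Fin dA × Fin dB).1 (q.2 : Fin dA × Fin dB).1‖ *
          ‖b (q.1 : Fin dA × Fin dB).2 (q.2 : Fin dA × Fin dB).2‖ := by
  classical
  set M := a ⊗ₖ b with hM
  set S : ℝ := ⨆ q : Fin R1.card × Fin R2.card, ‖star (φ q.1) ⬝ᵥ M.mulVec (ψ q.2)‖ with hS
  have hkeyφ := onb_complete R1 φ hφon hφsupp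
  have hkeyψ := onb_complete R2 ψ hψon hψsupp
  have hn1 : 0 < R1.card := Finset.card_pos.mpr hR1
  have hn2 : 0 < R2.card := Finset.card_pos.mpr hR2
  haveI : Nonempty (Fin R1.card) := ⟨⟨0, hn1⟩⟩
  haveI : Nonempty (Fin R2.card) := ⟨⟨0, hn2⟩⟩
  haveI : Nonempty R1 := Finset.nonempty_coe_sort.mpr hR1
  haveI : Nonempty R2 := Finset.nonempty_coe_sort.mpr hR2
  have hbdd : BddAbove (Set.range fun q : Fin R1.card × Fin R2.card =>
      ‖star (φ q.1) ⬝ᵥ M.mulVec (ψ q.2)‖) := Set.Finite.bddAbove (Set.finite_range _)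
  have hSle : ∀ i j, ‖star (φ i) ⬝ᵥ M.mulVec (ψ j)‖ ≤ S := fun i j =>
    le_ciSup hbdd (i, j)
  have hS0 : 0 ≤ S := le_trans (norm_nonneg _) (hSle Classical.ofNonempty Classical.ofNonempty)
  -- key expansion
  have key : ∀ p ∈ R1, ∀ q ∈ R2, M p q
      = ∑ i, ∑ j, φ i p * (starRingEnd ℂ) (ψ j q) * (star (φ i) ⬝ᵥ M.mulVec (ψ j)) := by
    intro p hp q hq
    have expand : ∀ (i : Fin R1.card) (j : Fin R2.card),
        star (φ i) ⬝ᵥ M.mulVec (ψ j)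
          = ∑ x, ∑ y, (starRingEnd ℂ) (φ i x) * (M x y * ψ j y) := by
      intro i j
      simp [dotProduct, mulVec, Finset.mul_sum, RCLike.star_def]
    calc M p q
        = ∑ x, ∑ y, M x y * (∑ i, φ i p * (starRingEnd ℂ) (φ i x))
            * (∑ j, (starRingEnd ℂ) (ψ j q) * ψ j y) := by
          have hA : ∀ x, (∑ i, φ i p * (starRingEnd ℂ) (φ i x))
              = if x = p then 1 else 0 := by
            intro x
            have := congrArg (starRingEnd ℂ) (hkeyφ p hp x)
            rw [map_sum] at this
            simpa [apply_ite] using this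
          simp only [hA, hkeyψ q hq]
          simp [Finset.sum_ite_eq', Finset.mul_sum]
      _ = ∑ x, ∑ y, ∑ i, ∑ j,
            φ i p * (starRingEnd ℂ) (ψ j q) * ((starRingEnd ℂ) (φ i x) * (M x y * ψ j y)) := by
          apply Finset.sum_congr rfl; intro x _
          apply Finset.sum_congr rfl; intro y _
          simp only [Finset.mul_sum, Finset.sum_mul]
          rw [Finset.sum_comm]
          apply Finset.sum_congr rfl; intro i _
          apply Finset.sum_congr rfl; intro j _
          ring
      _ = ∑ i, ∑ j, φ i p * (starRingEnd ℂ) (ψ j q) * (star (φ i) ⬝ᵥ M.mulVec (ψ j)) := by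
          rw [sum_swap4]
          apply Finset.sum_congr rfl; intro i _
          apply Finset.sum_congr rfl; intro j _
          rw [expand i j, Finset.mul_sum]
          apply Finset.sum_congr rfl; intro x _
          rw [Finset.mul_sum]
  -- bound
  rw [ge_iff_le]
  apply ciSup_le
  rintro ⟨⟨p, hp⟩, ⟨q, hq⟩⟩
  have hMentry : ‖a p.1 q.1‖ * ‖b p.2 q.2‖ = ‖M p q‖ := by
    rw [hM]
    simp [Matrix.kroneckerMap_apply]
  rw [hMentry, key p hp q hq]
  calc ‖∑ i, ∑ j, φ i p * (starRingEnd ℂ) (ψ j q) * (star (φ i) ⬝ᵥ M.mulVec (ψ j))‖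
      ≤ ∑ i, ∑ j, ‖φ i p‖ * ‖ψ j q‖ * ‖star (φ i) ⬝ᵥ M.mulVec (ψ j)‖ := by
        refine (norm_sum_le _ _).trans (Finset.sum_le_sum fun i _ =>
          (norm_sum_le _ _).trans (Finset.sum_le_sum fun j _ => ?_))
        rw [norm_mul, norm_mul]
        simp
    _ ≤ ∑ i, ∑ j, ‖φ i p‖ * ‖ψ j q‖ * S := by
        refine Finset.sum_le_sum fun i _ => Finset.sum_le_sum fun j _ => ?_
        exact mul_le_mul_of_nonneg_left (hSle i j) (by positivity)
    _ = (∑ i, ‖φ i p‖) * (∑ j, ‖ψ j q‖) * S := by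
        simp only [Finset.sum_mul, Finset.mul_sum]
        rw [Finset.sum_comm]
    _ ≤ Real.sqrt R1.card * Real.sqrt R2.card * S := by
        have h1 := onb_sum_norm_le R1 φ hkeyφ hp
        have h2 := onb_sum_norm_le R2 ψ hkeyψ hq
        have n1 : 0 ≤ ∑ i, ‖φ i p‖ := Finset.sum_nonneg fun i _ => norm_nonneg _
        have n2 : 0 ≤ ∑ j, ‖ψ j q‖ := Finset.sum_nonneg fun j _ => norm_nonneg _
        apply mul_le_mul_of_nonneg_right _ hS0
        exact mul_le_mul h1 h2 n2 (Real.sqrt_nonneg _)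
    _ = Real.sqrt ((R1.card : ℝ) * R2.card) * S := by
        rw [Real.sqrt_mul (by positivity)]
end

section
/- Let S = {ψ_1,…,ψ_n} be an orthonormal set of product states in ℂ^{d_A}⊗ℂ^{d_B} inducing a tiling, let T1 and T2 be two distinct tiles of this tiling such that the states whose tile is T_t (t ∈ {1,2}) form an orthonormal basis of the subspace spanned by the standard product basis vectors indexed by T_t, and let a ∈ M_{d_A}(ℂ), b ∈ M_{d_B}(ℂ) be positive semidefinite with ⟨ψ_i, (a⊗b) ψ_i⟩ ≠ 0 for every i. Then √(|T1|·|T2|) · δ · tr(a⊗b) ≥ |a_{r1 r2}|·|b_{c1 c2}| for every r_t ∈ rows(T_t) and c_t ∈ cols(T_t), t ∈ {1,2}. -/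
open Matrix Kronecker
open scoped ComplexOrder

/-- The disturbance `δ` of the product operator `a ⊗ b` on the family of states `ψ`. -/
noncomputable def disturbance {n dA dB : ℕ} (ψ : Fin n → Fin dA × Fin dB → ℂ)
    (a : Matrix (Fin dA) (Fin dA) ℂ) (b : Matrix (Fin dB) (Fin dB) ℂ) : ℝ :=
  ⨆ p : {q : Fin n × Fin n // q.1 ≠ q.2},
    ‖star (ψ p.1.1) ⬝ᵥ (a ⊗ₖ b).mulVec (ψ p.1.2)‖ /
      Real.sqrt ((star (ψ p.1.1) ⬝ᵥ (a ⊗ₖ b).mulVec (ψ p.1.1)).re *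
        (star (ψ p.1.2) ⬝ᵥ (a ⊗ₖ b).mulVec (ψ p.1.2)).re)

-- The tile induced by the state `ψ i`: the set of grid positions where it is nonzero.
open Classical in
noncomputable def tile {n dA dB : ℕ} (ψ : Fin n → Fin dA × Fin dB → ℂ) (i : Fin n) :
    Finset (Fin dA × Fin dB) :=
  Finset.univ.filter (fun p => ψ i p ≠ 0)

lemma sum_dotProduct' {κ ι : Type*} [Fintype κ] [Fintype ι] (v : κ → ι → ℂ) (w : ι → ℂ) :
    (∑ i, v i) ⬝ᵥ w = ∑ i, v i ⬝ᵥ w := by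
  simp only [dotProduct, Finset.sum_apply, Finset.sum_mul]
  exact Finset.sum_comm

lemma dotProduct_sum' {κ ι : Type*} [Fintype κ] [Fintype ι] (v : ι → ℂ) (w : κ → ι → ℂ) :
    v ⬝ᵥ (∑ i, w i) = ∑ i, v ⬝ᵥ w i := by
  simp only [dotProduct, Finset.sum_apply, Finset.mul_sum]
  exact Finset.sum_comm

lemma expand' {κ₁ κ₂ ι : Type*} [Fintype κ₁] [Fintype κ₂] [Fintype ι]
    (M : Matrix ι ι ℂ) (u : κ₁ → ι → ℂ) (v : κ₂ → ι → ℂ) (c : κ₁ → ℂ) (d : κ₂ → ℂ) :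
    star (∑ i, c i • u i) ⬝ᵥ M *ᵥ (∑ j, d j • v j)
      = ∑ i, ∑ j, star (c i) * d j * (star (u i) ⬝ᵥ M *ᵥ v j) := by
  have hy : M *ᵥ (∑ j, d j • v j) = ∑ j, d j • (M *ᵥ v j) := by
    simp only [← Matrix.mulVecLin_apply, map_sum, map_smul]
  rw [hy, star_sum, sum_dotProduct']
  refine Finset.sum_congr rfl fun i _ => ?_
  rw [star_smul, smul_dotProduct, dotProduct_sum']
  rw [Finset.smul_sum]
  refine Finset.sum_congr rfl fun j _ => ?_
  rw [dotProduct_smul]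
  simp [smul_eq_mul]; ring

lemma expand0 {κ₁ κ₂ ι : Type*} [Fintype κ₁] [Fintype κ₂] [Fintype ι] [DecidableEq ι]
    (u : κ₁ → ι → ℂ) (v : κ₂ → ι → ℂ) (c : κ₁ → ℂ) (d : κ₂ → ℂ) :
    star (∑ i, c i • u i) ⬝ᵥ (∑ j, d j • v j)
      = ∑ i, ∑ j, star (c i) * d j * (star (u i) ⬝ᵥ v j) := by
  have := expand' (1 : Matrix ι ι ℂ) u v c d
  simpa [Matrix.one_mulVec] using this

lemma quad' {ι : Type*} [Fintype ι] (C : Matrix ι ι ℂ) (x y : ι → ℂ) :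
    star x ⬝ᵥ (Cᴴ * C) *ᵥ y = star (C *ᵥ x) ⬝ᵥ (C *ᵥ y) := by
  rw [← Matrix.mulVec_mulVec, Matrix.dotProduct_mulVec, Matrix.star_mulVec]

lemma dot_self_re' {ι : Type*} [Fintype ι] (w : ι → ℂ) :
    (star w ⬝ᵥ w).re = ∑ r, ‖w r‖ ^ 2 := by
  rw [dotProduct, Complex.re_sum]
  refine Finset.sum_congr rfl fun r _ => ?_
  rw [Pi.star_apply, show star (w r) = (starRingEnd ℂ) (w r) from rfl, ← Complex.normSq_eq_conj_mul_self,
    Complex.ofReal_re, ← Complex.sq_norm]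

example : True := trivial

lemma sum_dot_le_trace' {N ι : Type*} [Fintype N] [Fintype ι] [DecidableEq ι]
    (ψ : N → ι → ℂ)
    (hunit : ∀ i, star (ψ i) ⬝ᵥ ψ i = 1) (horth : ∀ i j, i ≠ j → star (ψ i) ⬝ᵥ ψ j = 0)
    (C : Matrix ι ι ℂ) (s : Finset N) :
    ∑ i ∈ s, (star (ψ i) ⬝ᵥ (Cᴴ * C) *ᵥ (ψ i)).re ≤ ((Cᴴ * C).trace).re := by
  classical
  have horthE : Orthonormal ℂ (fun i => (WithLp.equiv 2 (ι → ℂ)).symm (ψ i)) := by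
    rw [orthonormal_iff_ite]
    intro i j
    rw [EuclideanSpace.inner_eq_star_dotProduct, dotProduct_comm]
    change star (ψ i) ⬝ᵥ ψ j = _
    by_cases h : i = j
    · simp [h, hunit j]
    · simp [h, horth i j h]
  have htr : ((Cᴴ * C).trace).re = ∑ r, ∑ p, ‖C r p‖ ^ 2 := by
    rw [Matrix.trace, Complex.re_sum, Finset.sum_comm]
    refine Finset.sum_congr rfl fun p _ => ?_
    rw [Matrix.diag_apply, Matrix.mul_apply, Complex.re_sum]
    refine Finset.sum_congr rfl fun r _ => ?_
    rw [Matrix.conjTranspose_apply, show star (C r p) = (starRingEnd ℂ) (C r p) from rfl,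
      ← Complex.normSq_eq_conj_mul_self, Complex.ofReal_re, ← Complex.sq_norm]
  have hrow : ∀ r, ∑ i ∈ s, ‖(C *ᵥ ψ i) r‖ ^ 2 ≤ ∑ p, ‖C r p‖ ^ 2 := by
    intro r
    have key := horthE.sum_inner_products_le (s := s)
      ((WithLp.equiv 2 (ι → ℂ)).symm (fun p => star (C r p)))
    have hinner : ∀ i, ‖(inner ℂ ((WithLp.equiv 2 (ι → ℂ)).symm (ψ i))
        ((WithLp.equiv 2 (ι → ℂ)).symm (fun p => star (C r p))) : ℂ)‖ = ‖(C *ᵥ ψ i) r‖ := by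
      intro i
      rw [EuclideanSpace.inner_eq_star_dotProduct, dotProduct_comm]
      change ‖star (ψ i) ⬝ᵥ (fun p => star (C r p))‖ = ‖(C *ᵥ ψ i) r‖
      have : star (ψ i) ⬝ᵥ (fun p => star (C r p)) = star ((C *ᵥ ψ i) r) := by
        simp only [dotProduct, Matrix.mulVec, star_sum, Pi.star_apply, star_mul']
        exact Finset.sum_congr rfl fun p _ => by ring
      rw [this, norm_star]
    have hnorm : ‖(WithLp.equiv 2 (ι → ℂ)).symm (fun p => star (C r p))‖ ^ 2
        = ∑ p, ‖C r p‖ ^ 2 := by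
      rw [EuclideanSpace.norm_eq]
      rw [Real.sq_sqrt (by positivity)]
      exact Finset.sum_congr rfl fun p _ => by show ‖star (C r p)‖ ^ 2 = _; rw [norm_star]
    calc ∑ i ∈ s, ‖(C *ᵥ ψ i) r‖ ^ 2 = ∑ i ∈ s, ‖(inner ℂ ((WithLp.equiv 2 (ι → ℂ)).symm (ψ i))
          ((WithLp.equiv 2 (ι → ℂ)).symm (fun p => star (C r p))) : ℂ)‖ ^ 2 :=
        Finset.sum_congr rfl fun i _ => by rw [hinner i]
      _ ≤ _ := key
      _ = ∑ p, ‖C r p‖ ^ 2 := hnorm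
  calc ∑ i ∈ s, (star (ψ i) ⬝ᵥ (Cᴴ * C) *ᵥ (ψ i)).re
      = ∑ i ∈ s, ∑ r, ‖(C *ᵥ ψ i) r‖ ^ 2 := by
        refine Finset.sum_congr rfl fun i _ => ?_
        rw [quad', dot_self_re']
    _ = ∑ r, ∑ i ∈ s, ‖(C *ᵥ ψ i) r‖ ^ 2 := Finset.sum_comm
    _ ≤ ∑ r, ∑ p, ‖C r p‖ ^ 2 := Finset.sum_le_sum fun r _ => hrow r
    _ = ((Cᴴ * C).trace).re := htr.symm

set_option maxHeartbeats 1000000 in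
/-- **"pair of tiles" lemma.** Let `S = {ψ i}` be an orthonormal set of product
states inducing a tiling, let `T1 = R1 ×ˢ C1` and `T2 = R2 ×ˢ C2` be two distinct tiles of the
tiling such that the states whose tile is `T_t` form an orthonormal basis of the subspace
spanned by the standard product basis vectors indexed by `T_t`, and let `a, b` be positive
semidefinite with nonvanishing diagonal terms `⟨ψ i, (a⊗b) ψ i⟩`. Then
`√(|T1|·|T2|) · δ · tr(a⊗b) ≥ |a_{r1 r2}|·|b_{c1 c2}|` for all `r_t ∈ rows(T_t)`,
`c_t ∈ cols(T_t)`. -/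
theorem stmt3 {n dA dB : ℕ} (ψ : Fin n → Fin dA × Fin dB → ℂ)
    (α : Fin n → Fin dA → ℂ) (β : Fin n → Fin dB → ℂ)
    (hprod : ∀ i, ψ i = fun p => α i p.1 * β i p.2)
    (hunit : ∀ i, star (ψ i) ⬝ᵥ ψ i = 1)
    (horth : ∀ i j, i ≠ j → star (ψ i) ⬝ᵥ ψ j = 0)
    (htiling : ∀ i j, tile ψ i = tile ψ j ∨ Disjoint (tile ψ i) (tile ψ j))
    (R1 R2 : Finset (Fin dA)) (C1 C2 : Finset (Fin dB))
    (hT1 : ∃ i, tile ψ i = R1 ×ˢ C1) (hT2 : ∃ i, tile ψ i = R2 ×ˢ C2)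
    (hne : R1 ×ˢ C1 ≠ R2 ×ˢ C2)
    (hbasis1 : Submodule.span ℂ {v | ∃ i, tile ψ i = R1 ×ˢ C1 ∧ v = ψ i} =
      Submodule.span ℂ
        {v | ∃ p ∈ R1 ×ˢ C1, v = (Pi.single p 1 : Fin dA × Fin dB → ℂ)})
    (hbasis2 : Submodule.span ℂ {v | ∃ i, tile ψ i = R2 ×ˢ C2 ∧ v = ψ i} =
      Submodule.span ℂ
        {v | ∃ p ∈ R2 ×ˢ C2, v = (Pi.single p 1 : Fin dA × Fin dB → ℂ)})
    (a : Matrix (Fin dA) (Fin dA) ℂ) (b : Matrix (Fin dB) (Fin dB) ℂ)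
    (ha : a.PosSemidef) (hb : b.PosSemidef)
    (hnz : ∀ i, star (ψ i) ⬝ᵥ (a ⊗ₖ b).mulVec (ψ i) ≠ 0) :
    ∀ r1 ∈ R1, ∀ c1 ∈ C1, ∀ r2 ∈ R2, ∀ c2 ∈ C2,
      Real.sqrt (((R1 ×ˢ C1).card : ℝ) * (R2 ×ˢ C2).card) *
          disturbance ψ a b * ((a ⊗ₖ b).trace).re ≥
        ‖a r1 r2‖ * ‖b c1 c2‖ := by
  classical
  intro r1 hr1 c1 hc1 r2 hr2 c2 hc2
  open MatrixOrder in obtain ⟨Pa, haP⟩ := CStarAlgebra.nonneg_iff_eq_star_mul_self.mp ha.nonneg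
  open MatrixOrder in obtain ⟨Pb, hbP⟩ := CStarAlgebra.nonneg_iff_eq_star_mul_self.mp hb.nonneg
  set C : Matrix (Fin dA × Fin dB) (Fin dA × Fin dB) ℂ := Pa ⊗ₖ Pb with hC
  have hM : a ⊗ₖ b = Cᴴ * C := by
    rw [haP, hbP, hC, Matrix.mul_kronecker_mul]
    congr 1
    ext ⟨i, j⟩ ⟨k, l⟩
    simp [Matrix.conjTranspose_apply, Matrix.kroneckerMap_apply, star_mul']
  set Dre : Fin n → ℝ := fun i => (star (ψ i) ⬝ᵥ (a ⊗ₖ b) *ᵥ (ψ i)).re with hDre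
  set t : ℝ := ((a ⊗ₖ b).trace).re with ht
  set δ : ℝ := disturbance ψ a b with hδdef
  have hDre_def : ∀ i, Dre i = (star (ψ i) ⬝ᵥ (a ⊗ₖ b) *ᵥ (ψ i)).re := fun i => by rw [hDre]
  -- F2 : Bessel
  have F2 : ∀ s : Finset (Fin n), ∑ i ∈ s, Dre i ≤ t := by
    intro s
    have := sum_dot_le_trace' ψ hunit horth C s
    simpa [hDre, ht, ← hM] using this
  have F3 : 0 ≤ t := by simpa using F2 ∅
  -- F1 : positivity of diagonal terms
  have F1 : ∀ i, 0 < Dre i := by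
    intro i
    have hq : star (ψ i) ⬝ᵥ (a ⊗ₖ b) *ᵥ (ψ i) = star (C *ᵥ ψ i) ⬝ᵥ (C *ᵥ ψ i) := by
      rw [hM, quad']
    have hre : Dre i = ∑ r, ‖(C *ᵥ ψ i) r‖ ^ 2 := by
      rw [hDre_def, hq, dot_self_re']
    have h0 : (0:ℝ) ≤ Dre i := by
      rw [hre]; exact Finset.sum_nonneg fun r _ => by positivity
    rcases h0.lt_or_eq with h | h
    · exact h
    · exfalso
      have hw : ∀ r, (C *ᵥ ψ i) r = 0 := by
        intro r
        have := (Finset.sum_eq_zero_iff_of_nonneg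
          (fun r _ => by positivity : ∀ r ∈ Finset.univ, (0:ℝ) ≤ ‖(C *ᵥ ψ i) r‖ ^ 2)).mp
          (by rw [← hre, ← h])
        have h2 := this r (Finset.mem_univ r)
        have := pow_eq_zero_iff (n := 2) (by norm_num) |>.mp h2
        exact norm_eq_zero.mp this
      refine hnz i ?_
      have : (C *ᵥ ψ i) = 0 := funext hw
      rw [show (a ⊗ₖ b).mulVec (ψ i) = (a ⊗ₖ b) *ᵥ (ψ i) from rfl]
      rw [show star (ψ i) ⬝ᵥ (a ⊗ₖ b) *ᵥ (ψ i) = star (C *ᵥ ψ i) ⬝ᵥ (C *ᵥ ψ i) from hq, this]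
      simp
  clear_value Dre t δ
  -- F4 : nonnegativity of δ
  have F4 : 0 ≤ δ := by
    rw [hδdef]
    exact Real.iSup_nonneg fun p => div_nonneg (norm_nonneg _) (Real.sqrt_nonneg _)
  -- F5 : the δ bound on cross terms
  have F5 : ∀ i j, i ≠ j → ‖star (ψ i) ⬝ᵥ (a ⊗ₖ b) *ᵥ ψ j‖ ≤ δ * Real.sqrt (Dre i * Dre j) := by
    intro i j hij
    rw [hδdef, hDre_def i, hDre_def j]
    have hbdd : BddAbove (Set.range fun p : {q : Fin n × Fin n // q.1 ≠ q.2} =>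
        ‖star (ψ p.1.1) ⬝ᵥ (a ⊗ₖ b).mulVec (ψ p.1.2)‖ /
          Real.sqrt ((star (ψ p.1.1) ⬝ᵥ (a ⊗ₖ b).mulVec (ψ p.1.1)).re *
            (star (ψ p.1.2) ⬝ᵥ (a ⊗ₖ b).mulVec (ψ p.1.2)).re)) :=
      (Set.finite_range _).bddAbove
    have hle := le_ciSup hbdd ⟨(i, j), hij⟩
    have hpos : 0 < Real.sqrt ((star (ψ i) ⬝ᵥ (a ⊗ₖ b) *ᵥ ψ i).re *
        (star (ψ j) ⬝ᵥ (a ⊗ₖ b) *ᵥ ψ j).re) := by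
      rw [← hDre_def i, ← hDre_def j]
      exact Real.sqrt_pos.mpr (mul_pos (F1 i) (F1 j))
    show _ ≤ disturbance ψ a b * _
    rw [disturbance]
    exact (div_le_iff₀ hpos).mp hle
  -- the two families of coefficients
  set S1f : Finset (Fin n) := Finset.univ.filter (fun i => tile ψ i = R1 ×ˢ C1) with hS1f
  set S2f : Finset (Fin n) := Finset.univ.filter (fun i => tile ψ i = R2 ×ˢ C2) with hS2f
  have hrange1 : Set.range (fun i : ↥S1f => ψ (i : Fin n)) =
      {v | ∃ i, tile ψ i = R1 ×ˢ C1 ∧ v = ψ i} := by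
    ext v
    constructor
    · rintro ⟨⟨i, hi⟩, rfl⟩
      exact ⟨i, (Finset.mem_filter.mp hi).2, rfl⟩
    · rintro ⟨i, hi, rfl⟩
      exact ⟨⟨i, Finset.mem_filter.mpr ⟨Finset.mem_univ i, hi⟩⟩, rfl⟩
  have hrange2 : Set.range (fun i : ↥S2f => ψ (i : Fin n)) =
      {v | ∃ i, tile ψ i = R2 ×ˢ C2 ∧ v = ψ i} := by
    ext v
    constructor
    · rintro ⟨⟨i, hi⟩, rfl⟩
      exact ⟨i, (Finset.mem_filter.mp hi).2, rfl⟩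
    · rintro ⟨i, hi, rfl⟩
      exact ⟨⟨i, Finset.mem_filter.mpr ⟨Finset.mem_univ i, hi⟩⟩, rfl⟩
  have he1 : (Pi.single ((r1, c1) : Fin dA × Fin dB) 1 : Fin dA × Fin dB → ℂ) ∈
      Submodule.span ℂ (Set.range (fun i : ↥S1f => ψ (i : Fin n))) := by
    rw [hrange1, hbasis1]
    exact Submodule.subset_span ⟨(r1, c1), Finset.mem_product.mpr ⟨hr1, hc1⟩, rfl⟩
  have he2 : (Pi.single ((r2, c2) : Fin dA × Fin dB) 1 : Fin dA × Fin dB → ℂ) ∈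
      Submodule.span ℂ (Set.range (fun i : ↥S2f => ψ (i : Fin n))) := by
    rw [hrange2, hbasis2]
    exact Submodule.subset_span ⟨(r2, c2), Finset.mem_product.mpr ⟨hr2, hc2⟩, rfl⟩
  obtain ⟨c, hcsum⟩ := (Submodule.mem_span_range_iff_exists_fun ℂ).mp he1
  obtain ⟨d, hdsum⟩ := (Submodule.mem_span_range_iff_exists_fun ℂ).mp he2
  -- orthonormality within each family
  have horth1 : ∀ i j : ↥S1f, star (ψ (i : Fin n)) ⬝ᵥ ψ (j : Fin n) =
      if i = j then 1 else 0 := by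
    intro i j
    by_cases h : i = j
    · simp [h, hunit]
    · simp [h, horth _ _ (fun hh => h (Subtype.ext hh))]
  have horth2 : ∀ i j : ↥S2f, star (ψ (i : Fin n)) ⬝ᵥ ψ (j : Fin n) =
      if i = j then 1 else 0 := by
    intro i j
    by_cases h : i = j
    · simp [h, hunit]
    · simp [h, horth _ _ (fun hh => h (Subtype.ext hh))]
  have hone1 : ∑ i : ↥S1f, ‖c i‖ ^ 2 = 1 := by
    have h1 : star ((Pi.single (r1, c1) 1 : Fin dA × Fin dB → ℂ)) ⬝ᵥ
        ((Pi.single (r1, c1) 1 : Fin dA × Fin dB → ℂ)) = 1 := by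
      simp [dotProduct, Pi.single_apply, apply_ite]
    rw [← hcsum, expand0] at h1
    have h3 : (∑ i : ↥S1f, ∑ j : ↥S1f, star (c i) * c j * (star (ψ (i:Fin n)) ⬝ᵥ ψ (j:Fin n)))
        = ∑ i : ↥S1f, star (c i) * c i := by
      refine Finset.sum_congr rfl fun i _ => ?_
      rw [Finset.sum_eq_single i]
      · rw [horth1 i i, if_pos rfl, mul_one]
      · intro j _ hji
        rw [horth1 i j, if_neg (Ne.symm hji), mul_zero]
      · intro h; exact absurd (Finset.mem_univ i) h
    rw [h3] at h1
    have h4 := congrArg Complex.re h1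
    rw [Complex.re_sum, Complex.one_re] at h4
    rw [← h4]
    refine Finset.sum_congr rfl fun i _ => ?_
    rw [show star (c i) = (starRingEnd ℂ) (c i) from rfl, ← Complex.normSq_eq_conj_mul_self,
      Complex.ofReal_re, ← Complex.sq_norm]
  have hone2 : ∑ i : ↥S2f, ‖d i‖ ^ 2 = 1 := by
    have h1 : star ((Pi.single (r2, c2) 1 : Fin dA × Fin dB → ℂ)) ⬝ᵥ
        ((Pi.single (r2, c2) 1 : Fin dA × Fin dB → ℂ)) = 1 := by
      simp [dotProduct, Pi.single_apply, apply_ite]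
    rw [← hdsum, expand0] at h1
    have h3 : (∑ i : ↥S2f, ∑ j : ↥S2f, star (d i) * d j * (star (ψ (i:Fin n)) ⬝ᵥ ψ (j:Fin n)))
        = ∑ i : ↥S2f, star (d i) * d i := by
      refine Finset.sum_congr rfl fun i _ => ?_
      rw [Finset.sum_eq_single i]
      · rw [horth2 i i, if_pos rfl, mul_one]
      · intro j _ hji
        rw [horth2 i j, if_neg (Ne.symm hji), mul_zero]
      · intro h; exact absurd (Finset.mem_univ i) h
    rw [h3] at h1
    have h4 := congrArg Complex.re h1
    rw [Complex.re_sum, Complex.one_re] at h4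
    rw [← h4]
    refine Finset.sum_congr rfl fun i _ => ?_
    rw [show star (d i) = (starRingEnd ℂ) (d i) from rfl, ← Complex.normSq_eq_conj_mul_self,
      Complex.ofReal_re, ← Complex.sq_norm]
  -- Cauchy–Schwarz bounds
  have hP1 : ∑ i : ↥S1f, ‖c i‖ * Real.sqrt (Dre (i : Fin n)) ≤ Real.sqrt t := by
    calc ∑ i : ↥S1f, ‖c i‖ * Real.sqrt (Dre (i : Fin n))
        ≤ Real.sqrt (∑ i : ↥S1f, ‖c i‖ ^ 2) *
          Real.sqrt (∑ i : ↥S1f, Real.sqrt (Dre (i : Fin n)) ^ 2) :=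
          Real.sum_mul_le_sqrt_mul_sqrt _ _ _
      _ = Real.sqrt (∑ i : ↥S1f, Dre (i : Fin n)) := by
          rw [hone1, Real.sqrt_one, one_mul]
          congr 1
          exact Finset.sum_congr rfl fun i _ => Real.sq_sqrt (F1 _).le
      _ ≤ Real.sqrt t := by
          refine Real.sqrt_le_sqrt ?_
          rw [Finset.sum_coe_sort]
          exact F2 S1f
  have hP2 : ∑ j : ↥S2f, ‖d j‖ * Real.sqrt (Dre (j : Fin n)) ≤ Real.sqrt t := by
    calc ∑ j : ↥S2f, ‖d j‖ * Real.sqrt (Dre (j : Fin n))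
        ≤ Real.sqrt (∑ j : ↥S2f, ‖d j‖ ^ 2) *
          Real.sqrt (∑ j : ↥S2f, Real.sqrt (Dre (j : Fin n)) ^ 2) :=
          Real.sum_mul_le_sqrt_mul_sqrt _ _ _
      _ = Real.sqrt (∑ j : ↥S2f, Dre (j : Fin n)) := by
          rw [hone2, Real.sqrt_one, one_mul]
          congr 1
          exact Finset.sum_congr rfl fun j _ => Real.sq_sqrt (F1 _).le
      _ ≤ Real.sqrt t := by
          refine Real.sqrt_le_sqrt ?_
          rw [Finset.sum_coe_sort]
          exact F2 S2f
  -- distinct indices across the two tiles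
  have hdistinct : ∀ (i : ↥S1f) (j : ↥S2f), (i : Fin n) ≠ (j : Fin n) := by
    rintro ⟨i, hi⟩ ⟨j, hj⟩ h
    apply hne
    rw [← (Finset.mem_filter.mp hi).2, ← (Finset.mem_filter.mp hj).2]
    exact congrArg (tile ψ) h
  -- the matrix element between the two basis vectors
  have hstar1 : star ((Pi.single (r1, c1) 1 : Fin dA × Fin dB → ℂ)) =
      (Pi.single (r1, c1) 1 : Fin dA × Fin dB → ℂ) := by
    ext q
    by_cases h : q = (r1, c1)
    · subst h; simp
    · simp [Pi.single_eq_of_ne h]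
  have key0 : star ((Pi.single (r1, c1) 1 : Fin dA × Fin dB → ℂ)) ⬝ᵥ
      (a ⊗ₖ b) *ᵥ ((Pi.single (r2, c2) 1 : Fin dA × Fin dB → ℂ)) = a r1 r2 * b c1 c2 := by
    rw [hstar1, Matrix.mulVec_single, single_dotProduct]
    simp [Matrix.kroneckerMap_apply]
  -- the main chain
  have main : ‖a r1 r2‖ * ‖b c1 c2‖ ≤ δ * t := by
    calc ‖a r1 r2‖ * ‖b c1 c2‖
        = ‖star ((Pi.single (r1, c1) 1 : Fin dA × Fin dB → ℂ)) ⬝ᵥ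
            (a ⊗ₖ b) *ᵥ ((Pi.single (r2, c2) 1 : Fin dA × Fin dB → ℂ))‖ := by
          rw [key0, norm_mul]
      _ = ‖∑ i : ↥S1f, ∑ j : ↥S2f, star (c i) * d j *
            (star (ψ (i : Fin n)) ⬝ᵥ (a ⊗ₖ b) *ᵥ ψ (j : Fin n))‖ := by
          rw [← hcsum, ← hdsum, expand']
      _ ≤ ∑ i : ↥S1f, ∑ j : ↥S2f, ‖star (c i) * d j *
            (star (ψ (i : Fin n)) ⬝ᵥ (a ⊗ₖ b) *ᵥ ψ (j : Fin n))‖ :=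
          (norm_sum_le _ _).trans (Finset.sum_le_sum fun i _ => norm_sum_le _ _)
      _ ≤ ∑ i : ↥S1f, ∑ j : ↥S2f, ‖c i‖ * ‖d j‖ *
            (δ * (Real.sqrt (Dre (i : Fin n)) * Real.sqrt (Dre (j : Fin n)))) := by
          refine Finset.sum_le_sum fun i _ => Finset.sum_le_sum fun j _ => ?_
          rw [norm_mul, norm_mul, norm_star]
          have h5 := F5 _ _ (hdistinct i j)
          rw [Real.sqrt_mul (F1 _).le] at h5
          exact mul_le_mul_of_nonneg_left h5 (by positivity)
      _ = δ * ((∑ i : ↥S1f, ‖c i‖ * Real.sqrt (Dre (i : Fin n))) *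
            (∑ j : ↥S2f, ‖d j‖ * Real.sqrt (Dre (j : Fin n)))) := by
          rw [Finset.sum_mul_sum, Finset.mul_sum]
          refine Finset.sum_congr rfl fun i _ => ?_
          rw [Finset.mul_sum]
          exact Finset.sum_congr rfl fun j _ => by ring
      _ ≤ δ * (Real.sqrt t * Real.sqrt t) := by
          refine mul_le_mul_of_nonneg_left ?_ F4
          refine mul_le_mul hP1 hP2 ?_ (Real.sqrt_nonneg _)
          exact Finset.sum_nonneg fun j _ => by positivity
      _ = δ * t := by rw [Real.mul_self_sqrt F3]
  -- conclude using `√(|T1|·|T2|) ≥ 1`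
  have hcard : (1 : ℝ) ≤ Real.sqrt (((R1 ×ˢ C1).card : ℝ) * (R2 ×ˢ C2).card) := by
    rw [show (1:ℝ) = Real.sqrt 1 from (Real.sqrt_one).symm]
    refine Real.sqrt_le_sqrt ?_
    have h1 : 1 ≤ (R1 ×ˢ C1).card := Finset.card_pos.mpr
      ⟨(r1, c1), Finset.mem_product.mpr ⟨hr1, hc1⟩⟩
    have h2 : 1 ≤ (R2 ×ˢ C2).card := Finset.card_pos.mpr
      ⟨(r2, c2), Finset.mem_product.mpr ⟨hr2, hc2⟩⟩
    have : (1:ℝ) * 1 ≤ ((R1 ×ˢ C1).card : ℝ) * (R2 ×ˢ C2).card := by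
      refine mul_le_mul ?_ ?_ (by norm_num) (Nat.cast_nonneg _) <;> exact_mod_cast ‹_›
    linarith
  have hδt : 0 ≤ δ * t := mul_nonneg F4 F3
  calc ‖a r1 r2‖ * ‖b c1 c2‖ ≤ δ * t := main
    _ = 1 * (δ * t) := (one_mul _).symm
    _ ≤ Real.sqrt (((R1 ×ˢ C1).card : ℝ) * (R2 ×ˢ C2).card) * (δ * t) :=
        mul_le_mul_of_nonneg_right hcard hδt
    _ = Real.sqrt (((R1 ×ˢ C1).card : ℝ) * (R2 ×ˢ C2).card) * δ * t := by ring
end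

section
/- Let S = {ψ_1,…,ψ_n} be an orthonormal basis of ℂ^{d_A}⊗ℂ^{d_B} (so n = d_A d_B), let L := max_i |supp(ψ_i)| be the size of the largest support (i.e., the size of the largest tile) of states in S, and let c > 0. If S is c-rigid, then for all positive semidefinite a ∈ M_{d_A}(ℂ), b ∈ M_{d_B}(ℂ) with ⟨ψ_i, (a⊗b) ψ_i⟩ ≠ 0 for every i: (1/(cL)) · ( max_k ⟨ψ_k, (a⊗b) ψ_k⟩ / Σ_{j=1}^n ⟨ψ_j, (a⊗b) ψ_j⟩ − 1/n ) ≤ δ. In other words, the nonlocality constant of S satisfies η ≥ 1/(cL). -/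
open Matrix Kronecker
open scoped ComplexOrder

/-- The largest absolute value of an entry of a matrix. -/
noncomputable def maxEntry {m n : Type*} [Fintype m] [Fintype n] (M : Matrix m n ℂ) : ℝ :=
  ⨆ p : m × n, ‖M p.1 p.2‖

lemma kron_posSemidef {dA dB : ℕ} {a : Matrix (Fin dA) (Fin dA) ℂ} {b : Matrix (Fin dB) (Fin dB) ℂ}
    (ha : a.PosSemidef) (hb : b.PosSemidef) : (a ⊗ₖ b).PosSemidef := by
  obtain ⟨A, rfl⟩ : ∃ A : Matrix (Fin dA) (Fin dA) ℂ, a = Aᴴ * A := by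
    open scoped MatrixOrder in exact CStarAlgebra.nonneg_iff_eq_star_mul_self.mp ha.nonneg
  obtain ⟨B, rfl⟩ : ∃ B : Matrix (Fin dB) (Fin dB) ℂ, b = Bᴴ * B := by
    open scoped MatrixOrder in exact CStarAlgebra.nonneg_iff_eq_star_mul_self.mp hb.nonneg
  rw [Matrix.mul_kronecker_mul]
  have h : (Aᴴ ⊗ₖ Bᴴ) = (A ⊗ₖ B)ᴴ := by
    ext ⟨i,j⟩ ⟨k,l⟩
    simp [Matrix.conjTranspose_apply, Matrix.kroneckerMap_apply]
  rw [h]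
  exact Matrix.posSemidef_conjTranspose_mul_self _

lemma completeness {dA dB : ℕ} (ψ : Fin (dA*dB) → Fin dA × Fin dB → ℂ)
    (hunit : ∀ i, star (ψ i) ⬝ᵥ ψ i = 1)
    (horth : ∀ i j, i ≠ j → star (ψ i) ⬝ᵥ ψ j = 0)
    (p q : Fin dA × Fin dB) :
    ∑ j, (starRingEnd ℂ) (ψ j p) * ψ j q = if p = q then 1 else 0 := by
  classical
  set P : Matrix (Fin (dA*dB)) (Fin dA × Fin dB) ℂ := Matrix.of (fun i x => ψ i x) with hP
  have hPP : P * Pᴴ = 1 := by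
    ext i j
    have : ∑ x, ψ i x * (starRingEnd ℂ) (ψ j x) = star (ψ j) ⬝ᵥ ψ i := by
      simp [dotProduct, mul_comm]
    simp only [Matrix.mul_apply, Matrix.conjTranspose_apply, hP, Matrix.of_apply,
      Matrix.one_apply, Complex.star_def]
    rw [this]
    by_cases h : i = j
    · subst h; simp [hunit i]
    · simp [h, horth j i (Ne.symm h)]
  have hPPT : Pᴴ * P = 1 := (Matrix.mul_eq_one_comm_of_equiv finProdFinEquiv.symm).mp hPP
  have := congrFun (congrFun hPPT p) q
  simpa [Matrix.mul_apply, Matrix.conjTranspose_apply, hP, Matrix.one_apply] using this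

lemma sum_quad_eq_trace {dA dB : ℕ} (ψ : Fin (dA*dB) → Fin dA × Fin dB → ℂ)
    (hcomp : ∀ p q, ∑ j, (starRingEnd ℂ) (ψ j p) * ψ j q = if p = q then 1 else 0)
    (M : Matrix (Fin dA × Fin dB) (Fin dA × Fin dB) ℂ) :
    ∑ j, star (ψ j) ⬝ᵥ M.mulVec (ψ j) = M.trace := by
  classical
  have h1 : ∀ j, star (ψ j) ⬝ᵥ M.mulVec (ψ j)
      = ∑ p, ∑ q, M p q * ((starRingEnd ℂ) (ψ j p) * ψ j q) := by
    intro j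
    simp only [dotProduct, Matrix.mulVec, Pi.star_apply, Complex.star_def,
      dotProduct, Finset.mul_sum]
    congr 1; ext p; congr 1; ext q; ring
  calc ∑ j, star (ψ j) ⬝ᵥ M.mulVec (ψ j)
      = ∑ j, ∑ p, ∑ q, M p q * ((starRingEnd ℂ) (ψ j p) * ψ j q) := by
        exact Finset.sum_congr rfl fun j _ => h1 j
    _ = ∑ p, ∑ q, M p q * ∑ j, (starRingEnd ℂ) (ψ j p) * ψ j q := by
        rw [Finset.sum_comm]
        refine Finset.sum_congr rfl fun p _ => ?_
        rw [Finset.sum_comm]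
        refine Finset.sum_congr rfl fun q _ => ?_
        rw [← Finset.mul_sum]
    _ = ∑ p, M p p := by
        refine Finset.sum_congr rfl fun p _ => ?_
        rw [Finset.sum_eq_single p]
        · rw [hcomp p p]; simp
        · intro q _ hq; rw [hcomp p q]; simp [Ne.symm hq]
        · simp
    _ = M.trace := rfl

lemma maxEntry_nonneg {m n : Type*} [Fintype m] [Fintype n] (M : Matrix m n ℂ) :
    0 ≤ maxEntry M := Real.iSup_nonneg fun _ => norm_nonneg _

lemma le_maxEntry {m n : Type*} [Fintype m] [Fintype n] (M : Matrix m n ℂ) (p : m) (q : n) :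
    ‖M p q‖ ≤ maxEntry M :=
  le_ciSup (f := fun p : m × n => ‖M p.1 p.2‖) (Set.Finite.bddAbove (Set.finite_range _)) (p, q)

lemma quad_bound {dA dB : ℕ} (x : Fin dA × Fin dB → ℂ)
    (N : Matrix (Fin dA × Fin dB) (Fin dA × Fin dB) ℂ)
    (t : Finset (Fin dA × Fin dB)) (ht : ∀ p, p ∉ t → x p = 0)
    (hx : ∑ p, ‖x p‖^2 = 1) :
    ‖star x ⬝ᵥ N.mulVec x‖ ≤ t.card * maxEntry N := by
  classical
  have expand : star x ⬝ᵥ N.mulVec x = ∑ p ∈ t, ∑ q ∈ t, (starRingEnd ℂ) (x p) * N p q * x q := by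
    rw [show star x ⬝ᵥ N.mulVec x = ∑ p, ∑ q, (starRingEnd ℂ) (x p) * N p q * x q by
      simp only [dotProduct, Matrix.mulVec, Pi.star_apply, Complex.star_def,
        dotProduct, Finset.mul_sum]
      congr 1; ext p; congr 1; ext q; ring]
    rw [← Finset.sum_subset (Finset.subset_univ t)]
    · refine Finset.sum_congr rfl fun p _ => ?_
      rw [← Finset.sum_subset (Finset.subset_univ t)]
      intro q _ hq; rw [ht q hq]; ring
    · intro p _ hp
      simp [ht p hp]
  rw [expand]
  calc ‖∑ p ∈ t, ∑ q ∈ t, (starRingEnd ℂ) (x p) * N p q * x q‖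
      ≤ ∑ p ∈ t, ∑ q ∈ t, ‖x p‖ * ‖x q‖ * maxEntry N := by
        refine (norm_sum_le _ _).trans (Finset.sum_le_sum fun p _ => ?_)
        refine (norm_sum_le _ _).trans (Finset.sum_le_sum fun q _ => ?_)
        rw [norm_mul, norm_mul, RingHomIsometric.norm_map]
        calc ‖x p‖ * ‖N p q‖ * ‖x q‖ ≤ ‖x p‖ * maxEntry N * ‖x q‖ := by
              gcongr; exact le_maxEntry N p q
          _ = ‖x p‖ * ‖x q‖ * maxEntry N := by ring
    _ = (∑ p ∈ t, ‖x p‖)^2 * maxEntry N := by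
        rw [sq, Finset.sum_mul_sum]
        simp [Finset.sum_mul]
    _ ≤ (t.card * ∑ p ∈ t, ‖x p‖^2) * maxEntry N := by
        gcongr ?_ * _
        · exact maxEntry_nonneg N
        · exact sq_sum_le_card_mul_sum_sq
    _ = t.card * maxEntry N := by
        rw [show ∑ p ∈ t, ‖x p‖^2 = 1 from by
          rw [← hx, Finset.sum_subset (Finset.subset_univ t)]
          intro p _ hp; simp [ht p hp]]
        ring


/-- If an orthonormal basis `S = {ψ i}` of `ℂ^{d_A} ⊗ ℂ^{d_B}` (with
`n = d_A d_B` states) is `c`-rigid and `L` is the size of its largest tile, then for all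
positive semidefinite `a, b` with `⟨ψ i, (a⊗b) ψ i⟩ ≠ 0` for every `i`,
`(1/(cL)) · (max_k ⟨ψ k,(a⊗b)ψ k⟩ / Σ_j ⟨ψ j,(a⊗b)ψ j⟩ − 1/n) ≤ δ`;
i.e. the nonlocality constant satisfies `η ≥ 1/(cL)`. -/
theorem stmt4 {dA dB : ℕ} (ψ : Fin (dA * dB) → Fin dA × Fin dB → ℂ)
    (hunit : ∀ i, star (ψ i) ⬝ᵥ ψ i = 1)
    (horth : ∀ i j, i ≠ j → star (ψ i) ⬝ᵥ ψ j = 0)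
    (L : ℕ) (hL : L = Finset.univ.sup (fun i => (tile ψ i).card))
    (c : ℝ) (hc : 0 < c)
    (hrigid : ∀ (a : Matrix (Fin dA) (Fin dA) ℂ) (b : Matrix (Fin dB) (Fin dB) ℂ),
      a.PosSemidef → b.PosSemidef →
      (∀ i, star (ψ i) ⬝ᵥ (a ⊗ₖ b).mulVec (ψ i) ≠ 0) →
      maxEntry (((a ⊗ₖ b).trace)⁻¹ • (a ⊗ₖ b) -
          ((dA * dB : ℂ))⁻¹ • (1 : Matrix (Fin dA × Fin dB) (Fin dA × Fin dB) ℂ)) ≤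
        c * disturbance ψ a b) :
    ∀ (a : Matrix (Fin dA) (Fin dA) ℂ) (b : Matrix (Fin dB) (Fin dB) ℂ),
      a.PosSemidef → b.PosSemidef →
      (∀ i, star (ψ i) ⬝ᵥ (a ⊗ₖ b).mulVec (ψ i) ≠ 0) →
      (1 / (c * L)) *
          ((⨆ k, (star (ψ k) ⬝ᵥ (a ⊗ₖ b).mulVec (ψ k)).re) /
              (∑ j, (star (ψ j) ⬝ᵥ (a ⊗ₖ b).mulVec (ψ j)).re) -
            1 / (dA * dB : ℝ)) ≤
        disturbance ψ a b := by
  intro a b ha hb hne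
  classical
  set M := a ⊗ₖ b with hM
  set δ := disturbance ψ a b with hδ
  have hδ0 : 0 ≤ δ := Real.iSup_nonneg fun p => div_nonneg (norm_nonneg _) (Real.sqrt_nonneg _)
  by_cases hn0 : dA * dB = 0
  · have hE : IsEmpty (Fin (dA * dB)) := by rw [hn0]; infer_instance
    have h1 : (⨆ k, (star (ψ k) ⬝ᵥ M.mulVec (ψ k)).re) = 0 := Real.iSup_of_isEmpty _
    have h2 : (∑ j, (star (ψ j) ⬝ᵥ M.mulVec (ψ j)).re) = 0 := by
      rw [Finset.univ_eq_empty, Finset.sum_empty]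
    have h3 : (dA : ℝ) * dB = 0 := by exact_mod_cast hn0
    rw [h1, h2, h3]
    simpa using hδ0
  -- main case
  have hMpsd : M.PosSemidef := kron_posSemidef ha hb
  have hnpos : 0 < dA * dB := Nat.pos_of_ne_zero hn0
  have hne' : Nonempty (Fin (dA * dB)) := Fin.pos_iff_nonempty.mp hnpos
  set v : Fin (dA * dB) → ℝ := fun k => (star (ψ k) ⬝ᵥ M.mulVec (ψ k)).re with hv
  have hw : ∀ k, star (ψ k) ⬝ᵥ M.mulVec (ψ k) = ((v k : ℝ) : ℂ) := by
    intro k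
    have h0 := hMpsd.dotProduct_mulVec_nonneg (ψ k)
    rw [Complex.nonneg_iff] at h0
    apply Complex.ext
    · simp [hv]
    · simp [← h0.2]
  have hvpos : ∀ k, 0 < v k := by
    intro k
    have h0 := hMpsd.dotProduct_mulVec_nonneg (ψ k)
    rw [Complex.nonneg_iff] at h0
    rcases lt_or_eq_of_le h0.1 with h | h
    · exact h
    · exfalso
      apply hne k
      rw [hw k]
      norm_cast
      exact h.symm
  set T : ℝ := ∑ j, v j with hT
  have hTpos : 0 < T := Finset.sum_pos (fun j _ => hvpos j) Finset.univ_nonempty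
  have htr : M.trace = ((T : ℝ) : ℂ) := by
    rw [← sum_quad_eq_trace ψ (completeness ψ hunit horth) M]
    rw [hT]
    push_cast
    exact Finset.sum_congr rfl fun j _ => hw j
  set N : Matrix (Fin dA × Fin dB) (Fin dA × Fin dB) ℂ :=
    (M.trace)⁻¹ • M - ((dA * dB : ℂ))⁻¹ • 1 with hN
  have hmaxN : maxEntry N ≤ c * δ := hrigid a b ha hb hne
  -- quadratic form of N
  have hNquad : ∀ k, star (ψ k) ⬝ᵥ N.mulVec (ψ k) = ((v k / T - 1 / (dA * dB : ℝ) : ℝ) : ℂ) := by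
    intro k
    rw [hN]
    rw [Matrix.sub_mulVec, dotProduct_sub, Matrix.smul_mulVec,
      Matrix.smul_mulVec, Matrix.one_mulVec, dotProduct_smul,
      dotProduct_smul, hunit k, hw k, htr]
    push_cast
    rw [smul_eq_mul, smul_eq_mul]
    ring
  -- unit norm in ℓ²
  have hnorm1 : ∀ k, ∑ p, ‖ψ k p‖^2 = 1 := by
    intro k
    have := congrArg Complex.re (hunit k)
    simpa [dotProduct, Complex.conj_mul', ← Complex.ofReal_pow] using this
  have hti : ∀ k, ∀ p, p ∉ tile ψ k → ψ k p = 0 := by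
    intro k p hp
    by_contra h
    exact hp (by simp [tile, h])
  have htcard : ∀ k, (tile ψ k).card ≤ L := by
    intro k; rw [hL]; exact Finset.le_sup (f := fun i => (tile ψ i).card) (Finset.mem_univ k)
  have hLpos : 0 < L := by
    obtain ⟨k⟩ := hne'
    have : (tile ψ k).Nonempty := by
      by_contra h
      rw [Finset.not_nonempty_iff_eq_empty] at h
      have : ∀ p, ψ k p = 0 := fun p => hti k p (by simp [h])
      have h1 := hunit k
      simp [dotProduct, this] at h1
    exact lt_of_lt_of_le (Finset.card_pos.mpr this) (htcard _)
  have hcL : 0 < c * (L : ℝ) := by positivity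
  -- the key inequality per k
  have hkey : ∀ k, v k / T - 1 / (dA * dB : ℝ) ≤ (L : ℝ) * (c * δ) := by
    intro k
    have h1 : v k / T - 1 / (dA * dB : ℝ) ≤ ‖star (ψ k) ⬝ᵥ N.mulVec (ψ k)‖ := by
      rw [hNquad k, Complex.norm_real]
      exact le_abs_self _
    have h2 : ‖star (ψ k) ⬝ᵥ N.mulVec (ψ k)‖ ≤ (tile ψ k).card * maxEntry N :=
      quad_bound (ψ k) N (tile ψ k) (hti k) (hnorm1 k)
    have h3 : ((tile ψ k).card : ℝ) * maxEntry N ≤ (L : ℝ) * (c * δ) := by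
      have := maxEntry_nonneg N
      calc ((tile ψ k).card : ℝ) * maxEntry N ≤ (L : ℝ) * maxEntry N := by
            gcongr; exact_mod_cast htcard k
        _ ≤ (L : ℝ) * (c * δ) := by gcongr
    linarith
  -- conclude
  have hsup : (⨆ k, v k) ≤ T * (1 / (dA * dB : ℝ) + (L : ℝ) * (c * δ)) := by
    refine ciSup_le fun k => ?_
    have := hkey k
    have h4 : v k / T ≤ 1 / (dA * dB : ℝ) + (L : ℝ) * (c * δ) := by linarith
    calc v k = (v k / T) * T := (div_mul_cancel₀ _ hTpos.ne').symm
      _ ≤ (1 / (dA * dB : ℝ) + (L : ℝ) * (c * δ)) * T := by gcongr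
      _ = T * (1 / (dA * dB : ℝ) + (L : ℝ) * (c * δ)) := by ring
  have hfinal : (⨆ k, v k) / T - 1 / (dA * dB : ℝ) ≤ (c * (L : ℝ)) * δ := by
    have h5 : (⨆ k, v k) / T ≤ 1 / (dA * dB : ℝ) + (L : ℝ) * (c * δ) := by
      rw [div_le_iff₀ hTpos]
      calc (⨆ k, v k) ≤ T * (1 / (dA * dB : ℝ) + (L : ℝ) * (c * δ)) := hsup
        _ = (1 / (dA * dB : ℝ) + (L : ℝ) * (c * δ)) * T := by ring
    linarith [h5]
  calc (1 / (c * (L : ℝ))) * ((⨆ k, v k) / T - 1 / (dA * dB : ℝ))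
      ≤ (1 / (c * (L : ℝ))) * ((c * (L : ℝ)) * δ) :=
        mul_le_mul_of_nonneg_left hfinal (by positivity)
    _ = δ := by rw [one_div, inv_mul_cancel_left₀ hcL.ne']
end

section
/- Let a, b ∈ M_3(ℂ) be positive semidefinite with ⟨ψ_i, (a⊗b) ψ_i⟩ ≠ 0 for each of the nine domino states ψ_i, and let δ be the disturbance of a⊗b on the domino states. Then for every i ∈ {0,2}: |a_{11} − a_{ii}| ≤ δ·tr(a) and |b_{11} − b_{ii}| ≤ δ·tr(b); consequently |a_{00} − a_{22}| ≤ 2δ·tr(a) and |b_{00} − b_{22}| ≤ 2δ·tr(b). -/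
open Matrix Kronecker
open scoped ComplexOrder

/-- The standard basis vector `|i⟩` of `ℂ³`. -/
noncomputable def e3 (i : Fin 3) : Fin 3 → ℂ := fun k => if k = i then 1 else 0

/-- `|i + j⟩ = (|i⟩ + |j⟩)/√2`. -/
noncomputable def pl (i j : Fin 3) : Fin 3 → ℂ := fun k => (e3 i k + e3 j k) / (Real.sqrt 2 : ℂ)

/-- `|i − j⟩ = (|i⟩ − |j⟩)/√2`. -/
noncomputable def mi (i j : Fin 3) : Fin 3 → ℂ := fun k => (e3 i k - e3 j k) / (Real.sqrt 2 : ℂ)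

/-- The product vector `α ⊗ β` in `ℂ³ ⊗ ℂ³`. -/
noncomputable def kp (α β : Fin 3 → ℂ) : Fin 3 × Fin 3 → ℂ := fun p => α p.1 * β p.2

/-- The nine domino states in `ℂ³ ⊗ ℂ³`. -/
noncomputable def dominoStates : Fin 9 → Fin 3 × Fin 3 → ℂ :=
  ![kp (e3 1) (e3 1),
    kp (e3 0) (pl 0 1), kp (e3 0) (mi 0 1),
    kp (e3 2) (pl 1 2), kp (e3 2) (mi 1 2),
    kp (pl 1 2) (e3 0), kp (mi 1 2) (e3 0),
    kp (pl 0 1) (e3 2), kp (mi 0 1) (e3 2)]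


lemma s2 : ((Real.sqrt 2 : ℝ) : ℂ) * ((Real.sqrt 2 : ℝ) : ℂ) = 2 := by
  rw [← Complex.ofReal_mul, Real.mul_self_sqrt (by norm_num)]; norm_num

lemma kron_inner (a b : Matrix (Fin 3) (Fin 3) ℂ) (α β γ d : Fin 3 → ℂ) :
    star (kp α β) ⬝ᵥ (a ⊗ₖ b).mulVec (kp γ d)
      = (star α ⬝ᵥ a.mulVec γ) * (star β ⬝ᵥ b.mulVec d) := by
  simp only [dotProduct, mulVec, kp, Pi.star_apply, star_mul', kroneckerMap_apply,
    Fintype.sum_prod_type, Fin.sum_univ_three]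
  ring

lemma dot_e3 (m : Matrix (Fin 3) (Fin 3) ℂ) (i : Fin 3) :
    star (e3 i) ⬝ᵥ m.mulVec (e3 i) = m i i := by
  fin_cases i <;> simp [e3, dotProduct, mulVec, Fin.sum_univ_three]

lemma dot_plmi (m : Matrix (Fin 3) (Fin 3) ℂ) :
    star (pl 0 1) ⬝ᵥ m.mulVec (mi 0 1) = (m 0 0 - m 0 1 + m 1 0 - m 1 1)/2 := by
  simp [pl, mi, e3, dotProduct, mulVec, Fin.sum_univ_three, ← add_div,
    map_div₀, Complex.conj_ofReal]
  field_simp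
  linear_combination (-1 : ℂ) * (m 0 0 - m 0 1 + m 1 0 - m 1 1) * s2

lemma dot_plpl (m : Matrix (Fin 3) (Fin 3) ℂ) :
    star (pl 0 1) ⬝ᵥ m.mulVec (pl 0 1) = (m 0 0 + m 0 1 + m 1 0 + m 1 1)/2 := by
  simp [pl, mi, e3, dotProduct, mulVec, Fin.sum_univ_three, ← add_div,
    map_div₀, Complex.conj_ofReal]
  field_simp
  linear_combination (-1 : ℂ) * (m 0 0 + m 0 1 + m 1 0 + m 1 1) * s2

lemma dot_mimi (m : Matrix (Fin 3) (Fin 3) ℂ) :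
    star (mi 0 1) ⬝ᵥ m.mulVec (mi 0 1) = (m 0 0 - m 0 1 - m 1 0 + m 1 1)/2 := by
  simp [pl, mi, e3, dotProduct, mulVec, Fin.sum_univ_three, ← add_div,
    map_div₀, Complex.conj_ofReal]
  field_simp
  linear_combination (-1 : ℂ) * (m 0 0 - m 0 1 - m 1 0 + m 1 1) * s2

lemma dot_plmi' (m : Matrix (Fin 3) (Fin 3) ℂ) :
    star (pl 1 2) ⬝ᵥ m.mulVec (mi 1 2) = (m 1 1 - m 1 2 + m 2 1 - m 2 2)/2 := by
  simp [pl, mi, e3, dotProduct, mulVec, Fin.sum_univ_three, Fin.ext_iff, ← add_div,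
    map_div₀, Complex.conj_ofReal]
  field_simp
  linear_combination (-1 : ℂ) * (m 1 1 - m 1 2 + m 2 1 - m 2 2) * s2

lemma dot_plpl' (m : Matrix (Fin 3) (Fin 3) ℂ) :
    star (pl 1 2) ⬝ᵥ m.mulVec (pl 1 2) = (m 1 1 + m 1 2 + m 2 1 + m 2 2)/2 := by
  simp [pl, mi, e3, dotProduct, mulVec, Fin.sum_univ_three, Fin.ext_iff, ← add_div,
    map_div₀, Complex.conj_ofReal]
  field_simp
  linear_combination (-1 : ℂ) * (m 1 1 + m 1 2 + m 2 1 + m 2 2) * s2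

lemma dot_mimi' (m : Matrix (Fin 3) (Fin 3) ℂ) :
    star (mi 1 2) ⬝ᵥ m.mulVec (mi 1 2) = (m 1 1 - m 1 2 - m 2 1 + m 2 2)/2 := by
  simp [pl, mi, e3, dotProduct, mulVec, Fin.sum_univ_three, Fin.ext_iff, ← add_div,
    map_div₀, Complex.conj_ofReal]
  field_simp
  linear_combination (-1 : ℂ) * (m 1 1 - m 1 2 - m 2 1 + m 2 2) * s2

lemma repos {z : ℂ} (h0 : 0 ≤ z) (hne : z ≠ 0) : 0 < z.re :=
  (Complex.lt_def.mp (h0.lt_of_ne (Ne.symm hne))).1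

lemma diag_real (m : Matrix (Fin 3) (Fin 3) ℂ) (hm : m.PosSemidef) (k : Fin 3) :
    m k k = (((m k k).re : ℝ) : ℂ) := by
  have h1 : (starRingEnd ℂ) (m k k) = m k k := by
    conv_rhs => rw [← hm.1]
    simp [conjTranspose_apply]
  exact (Complex.conj_eq_iff_re.mp h1).symm

lemma pair_bound (m : Matrix (Fin 3) (Fin 3) ℂ) (hm : m.PosSemidef)
    (i j : Fin 3) (hij : i ≠ j) (A δ : ℝ) (hA : 0 < A) (hδ0 : 0 ≤ δ)
    (hX : 0 < ((A:ℂ) * ((m i i + m i j + m j i + m j j)/2)).re)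
    (hY : 0 < ((A:ℂ) * ((m i i - m i j - m j i + m j j)/2)).re)
    (hδ : ‖(A:ℂ) * ((m i i - m i j + m j i - m j j)/2)‖ /
        Real.sqrt (((A:ℂ) * ((m i i + m i j + m j i + m j j)/2)).re *
          ((A:ℂ) * ((m i i - m i j - m j i + m j j)/2)).re) ≤ δ) :
    ‖m i i - m j j‖ ≤ δ * m.trace.re := by
  have hdiagc : ∀ k, m k k = ((m k k).re : ℂ) := fun k => diag_real m hm k
  have hji : m j i = (starRingEnd ℂ) (m i j) := by
    conv_lhs => rw [← hm.1]
    simp [conjTranspose_apply]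
  set u := (m i i).re with hu
  set v := (m j j).re with hv
  set w := m i j with hw
  have e1 : ((A:ℂ) * ((m i i + m i j + m j i + m j j)/2)).re = A*((u+v)/2 + w.re) := by
    rw [hdiagc i, hdiagc j, hji]
    simp [Complex.mul_re, Complex.add_re, Complex.sub_re, Complex.div_re, Complex.add_im,
      Complex.sub_im, Complex.div_im, Complex.normSq_apply]
    first | exact Or.inl trivial | exact Or.inl (by ring) | ring
  have e2 : ((A:ℂ) * ((m i i - m i j - m j i + m j j)/2)).re = A*((u+v)/2 - w.re) := by
    rw [hdiagc i, hdiagc j, hji]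
    simp [Complex.mul_re, Complex.add_re, Complex.sub_re, Complex.div_re, Complex.add_im,
      Complex.sub_im, Complex.div_im, Complex.normSq_apply]
    first | exact Or.inl trivial | exact Or.inl (by ring) | ring
  have e3 : ((A:ℂ) * ((m i i - m i j + m j i - m j j)/2)).re = A*(u-v)/2 := by
    rw [hdiagc i, hdiagc j, hji]
    simp [Complex.mul_re, Complex.add_re, Complex.sub_re, Complex.div_re, Complex.add_im,
      Complex.sub_im, Complex.div_im, Complex.normSq_apply]
    first | exact Or.inl trivial | exact Or.inl (by ring) | ring
  rw [e1] at hX; rw [e2] at hY; rw [e1, e2] at hδ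
  set X := A * ((u + v)/2 + w.re) with hXdef
  set Y := A * ((u + v)/2 - w.re) with hYdef
  clear_value X Y
  have hXY : X + Y = A * (u + v) := by rw [hXdef, hYdef]; ring
  have hnormre : A * |u - v| / 2 ≤ ‖(A:ℂ) * ((m i i - m i j + m j i - m j j)/2)‖ := by
    have h1 := Complex.abs_re_le_norm ((A:ℂ) * ((m i i - m i j + m j i - m j j)/2))
    rw [e3] at h1
    calc A * |u - v| / 2 = |A * (u - v) / 2| := by
          rw [abs_div, abs_mul, abs_of_pos hA]; simp
      _ ≤ _ := h1
  have hsq : Real.sqrt (X*Y) ≤ (X+Y)/2 := by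
    have h := Real.sqrt_le_sqrt (show X*Y ≤ ((X+Y)/2)^2 by nlinarith [sq_nonneg (X - Y)])
    rwa [Real.sqrt_sq (by positivity)] at h
  have hnum : ‖(A:ℂ) * ((m i i - m i j + m j i - m j j)/2)‖ ≤ δ * Real.sqrt (X*Y) :=
    (div_le_iff₀ (Real.sqrt_pos.2 (mul_pos hX hY))).mp hδ
  have key : |u - v| ≤ δ * (u + v) := by
    have h1 := hnormre.trans hnum
    have h2 := mul_le_mul_of_nonneg_left hsq hδ0
    nlinarith [h1, h2, hXY, hA]
  have hdiag : ∀ k, 0 ≤ (m k k).re := by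
    intro k
    have h := hm.re_dotProduct_nonneg (Pi.single k 1)
    simpa [dotProduct, mulVec, Pi.single_apply] using h
  have htrre : m.trace.re = ∑ k, (m k k).re := by
    simp [Matrix.trace, Matrix.diag, Complex.re_sum]
  have htr : u + v ≤ m.trace.re := by
    have hsum := Finset.sum_le_sum_of_subset_of_nonneg
      (Finset.subset_univ ({i, j} : Finset (Fin 3))) (fun k _ _ => hdiag k)
    rw [Finset.sum_pair hij] at hsum
    rw [htrre]; exact hsum
  have hfin : ‖m i i - m j j‖ = |u - v| := by
    rw [hdiagc i, hdiagc j, ← Complex.ofReal_sub, Complex.norm_real, Real.norm_eq_abs]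
  rw [hfin]
  calc |u - v| ≤ δ * (u + v) := key
    _ ≤ δ * m.trace.re := mul_le_mul_of_nonneg_left htr hδ0

/-- Bounds on the differences of diagonal entries of `a` and `b`
entailed by the disturbance of `a ⊗ b` on the domino states. -/
theorem stmt5
    (a b : Matrix (Fin 3) (Fin 3) ℂ) (ha : a.PosSemidef) (hb : b.PosSemidef)
    (hnz : ∀ i, star (dominoStates i) ⬝ᵥ (a ⊗ₖ b).mulVec (dominoStates i) ≠ 0) :
    (∀ i : Fin 3, i = 0 ∨ i = 2 →
      ‖a 1 1 - a i i‖ ≤ disturbance dominoStates a b * (Matrix.trace a).re ∧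
      ‖b 1 1 - b i i‖ ≤ disturbance dominoStates a b * (Matrix.trace b).re) ∧
    ‖a 0 0 - a 2 2‖ ≤ 2 * disturbance dominoStates a b * (Matrix.trace a).re ∧
    ‖b 0 0 - b 2 2‖ ≤ 2 * disturbance dominoStates a b * (Matrix.trace b).re := by
  set δ := disturbance dominoStates a b with hδdef
  have hδ0 : 0 ≤ δ := by
    rw [hδdef]
    exact Real.iSup_nonneg fun p => div_nonneg (norm_nonneg _) (Real.sqrt_nonneg _)
  have key : ∀ p q : Fin 9, p ≠ q →
      ‖star (dominoStates p) ⬝ᵥ (a ⊗ₖ b).mulVec (dominoStates q)‖ /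
        Real.sqrt ((star (dominoStates p) ⬝ᵥ (a ⊗ₖ b).mulVec (dominoStates p)).re *
          (star (dominoStates q) ⬝ᵥ (a ⊗ₖ b).mulVec (dominoStates q)).re) ≤ δ := by
    intro p q hpq
    exact le_ciSup (f := fun p : {q : Fin 9 × Fin 9 // q.1 ≠ q.2} =>
        ‖star (dominoStates p.1.1) ⬝ᵥ (a ⊗ₖ b).mulVec (dominoStates p.1.2)‖ /
          Real.sqrt ((star (dominoStates p.1.1) ⬝ᵥ (a ⊗ₖ b).mulVec (dominoStates p.1.1)).re *
            (star (dominoStates p.1.2) ⬝ᵥ (a ⊗ₖ b).mulVec (dominoStates p.1.2)).re))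
      (Set.Finite.bddAbove (Set.finite_range _))
      (⟨(p, q), hpq⟩ : {q : Fin 9 × Fin 9 // q.1 ≠ q.2})
  have hb01 : ‖b 0 0 - b 1 1‖ ≤ δ * (Matrix.trace b).re := by
    have r11 : star (dominoStates 1) ⬝ᵥ (a ⊗ₖ b).mulVec (dominoStates 1)
        = a 0 0 * ((b 0 0 + b 0 1 + b 1 0 + b 1 1)/2) := by
      show star (kp (e3 0) (pl 0 1)) ⬝ᵥ (a ⊗ₖ b).mulVec (kp (e3 0) (pl 0 1)) = _
      rw [kron_inner, dot_e3, dot_plpl]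
    have r22 : star (dominoStates 2) ⬝ᵥ (a ⊗ₖ b).mulVec (dominoStates 2)
        = a 0 0 * ((b 0 0 - b 0 1 - b 1 0 + b 1 1)/2) := by
      show star (kp (e3 0) (mi 0 1)) ⬝ᵥ (a ⊗ₖ b).mulVec (kp (e3 0) (mi 0 1)) = _
      rw [kron_inner, dot_e3, dot_mimi]
    have r12 : star (dominoStates 1) ⬝ᵥ (a ⊗ₖ b).mulVec (dominoStates 2)
        = a 0 0 * ((b 0 0 - b 0 1 + b 1 0 - b 1 1)/2) := by
      show star (kp (e3 0) (pl 0 1)) ⬝ᵥ (a ⊗ₖ b).mulVec (kp (e3 0) (mi 0 1)) = _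
      rw [kron_inner, dot_e3, dot_plmi]
    have haA : a 0 0 = (((a 0 0).re : ℝ) : ℂ) := diag_real a ha 0
    have hnn : (0:ℂ) ≤ a 0 0 := by have h := ha.dotProduct_mulVec_nonneg (e3 0); rwa [dot_e3] at h
    have hQX : (0:ℂ) ≤ star (pl 0 1) ⬝ᵥ b.mulVec (pl 0 1) := hb.dotProduct_mulVec_nonneg _
    have hQY : (0:ℂ) ≤ star (mi 0 1) ⬝ᵥ b.mulVec (mi 0 1) := hb.dotProduct_mulVec_nonneg _
    rw [dot_plpl] at hQX; rw [dot_mimi] at hQY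
    have hX1 := hnz 1; rw [r11] at hX1
    have hY1 := hnz 2; rw [r22] at hY1
    have hA : 0 < (a 0 0).re := repos hnn (left_ne_zero_of_mul hX1)
    have hδle := key 1 2 (by decide)
    rw [r11, r22, r12, haA] at hδle
    rw [haA] at hX1 hY1 hnn
    exact pair_bound b hb 0 1 (by decide) _ δ hA hδ0
      (repos (mul_nonneg hnn hQX) hX1) (repos (mul_nonneg hnn hQY) hY1) hδle
  have hb12 : ‖b 1 1 - b 2 2‖ ≤ δ * (Matrix.trace b).re := by
    have r11 : star (dominoStates 3) ⬝ᵥ (a ⊗ₖ b).mulVec (dominoStates 3)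
        = a 2 2 * ((b 1 1 + b 1 2 + b 2 1 + b 2 2)/2) := by
      show star (kp (e3 2) (pl 1 2)) ⬝ᵥ (a ⊗ₖ b).mulVec (kp (e3 2) (pl 1 2)) = _
      rw [kron_inner, dot_e3, dot_plpl']
    have r22 : star (dominoStates 4) ⬝ᵥ (a ⊗ₖ b).mulVec (dominoStates 4)
        = a 2 2 * ((b 1 1 - b 1 2 - b 2 1 + b 2 2)/2) := by
      show star (kp (e3 2) (mi 1 2)) ⬝ᵥ (a ⊗ₖ b).mulVec (kp (e3 2) (mi 1 2)) = _
      rw [kron_inner, dot_e3, dot_mimi']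
    have r12 : star (dominoStates 3) ⬝ᵥ (a ⊗ₖ b).mulVec (dominoStates 4)
        = a 2 2 * ((b 1 1 - b 1 2 + b 2 1 - b 2 2)/2) := by
      show star (kp (e3 2) (pl 1 2)) ⬝ᵥ (a ⊗ₖ b).mulVec (kp (e3 2) (mi 1 2)) = _
      rw [kron_inner, dot_e3, dot_plmi']
    have haA : a 2 2 = (((a 2 2).re : ℝ) : ℂ) := diag_real a ha 2
    have hnn : (0:ℂ) ≤ a 2 2 := by have h := ha.dotProduct_mulVec_nonneg (e3 2); rwa [dot_e3] at h
    have hQX : (0:ℂ) ≤ star (pl 1 2) ⬝ᵥ b.mulVec (pl 1 2) := hb.dotProduct_mulVec_nonneg _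
    have hQY : (0:ℂ) ≤ star (mi 1 2) ⬝ᵥ b.mulVec (mi 1 2) := hb.dotProduct_mulVec_nonneg _
    rw [dot_plpl'] at hQX; rw [dot_mimi'] at hQY
    have hX1 := hnz 3; rw [r11] at hX1
    have hY1 := hnz 4; rw [r22] at hY1
    have hA : 0 < (a 2 2).re := repos hnn (left_ne_zero_of_mul hX1)
    have hδle := key 3 4 (by decide)
    rw [r11, r22, r12, haA] at hδle
    rw [haA] at hX1 hY1 hnn
    exact pair_bound b hb 1 2 (by decide) _ δ hA hδ0
      (repos (mul_nonneg hnn hQX) hX1) (repos (mul_nonneg hnn hQY) hY1) hδle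
  have ha12 : ‖a 1 1 - a 2 2‖ ≤ δ * (Matrix.trace a).re := by
    have r11 : star (dominoStates 5) ⬝ᵥ (a ⊗ₖ b).mulVec (dominoStates 5)
        = b 0 0 * ((a 1 1 + a 1 2 + a 2 1 + a 2 2)/2) := by
      show star (kp (pl 1 2) (e3 0)) ⬝ᵥ (a ⊗ₖ b).mulVec (kp (pl 1 2) (e3 0)) = _
      rw [kron_inner, dot_e3, dot_plpl', mul_comm]
    have r22 : star (dominoStates 6) ⬝ᵥ (a ⊗ₖ b).mulVec (dominoStates 6)
        = b 0 0 * ((a 1 1 - a 1 2 - a 2 1 + a 2 2)/2) := by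
      show star (kp (mi 1 2) (e3 0)) ⬝ᵥ (a ⊗ₖ b).mulVec (kp (mi 1 2) (e3 0)) = _
      rw [kron_inner, dot_e3, dot_mimi', mul_comm]
    have r12 : star (dominoStates 5) ⬝ᵥ (a ⊗ₖ b).mulVec (dominoStates 6)
        = b 0 0 * ((a 1 1 - a 1 2 + a 2 1 - a 2 2)/2) := by
      show star (kp (pl 1 2) (e3 0)) ⬝ᵥ (a ⊗ₖ b).mulVec (kp (mi 1 2) (e3 0)) = _
      rw [kron_inner, dot_e3, dot_plmi', mul_comm]
    have haA : b 0 0 = (((b 0 0).re : ℝ) : ℂ) := diag_real b hb 0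
    have hnn : (0:ℂ) ≤ b 0 0 := by have h := hb.dotProduct_mulVec_nonneg (e3 0); rwa [dot_e3] at h
    have hQX : (0:ℂ) ≤ star (pl 1 2) ⬝ᵥ a.mulVec (pl 1 2) := ha.dotProduct_mulVec_nonneg _
    have hQY : (0:ℂ) ≤ star (mi 1 2) ⬝ᵥ a.mulVec (mi 1 2) := ha.dotProduct_mulVec_nonneg _
    rw [dot_plpl'] at hQX; rw [dot_mimi'] at hQY
    have hX1 := hnz 5; rw [r11] at hX1
    have hY1 := hnz 6; rw [r22] at hY1
    have hA : 0 < (b 0 0).re := repos hnn (left_ne_zero_of_mul hX1)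
    have hδle := key 5 6 (by decide)
    rw [r11, r22, r12, haA] at hδle
    rw [haA] at hX1 hY1 hnn
    exact pair_bound a ha 1 2 (by decide) _ δ hA hδ0
      (repos (mul_nonneg hnn hQX) hX1) (repos (mul_nonneg hnn hQY) hY1) hδle
  have ha01 : ‖a 0 0 - a 1 1‖ ≤ δ * (Matrix.trace a).re := by
    have r11 : star (dominoStates 7) ⬝ᵥ (a ⊗ₖ b).mulVec (dominoStates 7)
        = b 2 2 * ((a 0 0 + a 0 1 + a 1 0 + a 1 1)/2) := by
      show star (kp (pl 0 1) (e3 2)) ⬝ᵥ (a ⊗ₖ b).mulVec (kp (pl 0 1) (e3 2)) = _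
      rw [kron_inner, dot_e3, dot_plpl, mul_comm]
    have r22 : star (dominoStates 8) ⬝ᵥ (a ⊗ₖ b).mulVec (dominoStates 8)
        = b 2 2 * ((a 0 0 - a 0 1 - a 1 0 + a 1 1)/2) := by
      show star (kp (mi 0 1) (e3 2)) ⬝ᵥ (a ⊗ₖ b).mulVec (kp (mi 0 1) (e3 2)) = _
      rw [kron_inner, dot_e3, dot_mimi, mul_comm]
    have r12 : star (dominoStates 7) ⬝ᵥ (a ⊗ₖ b).mulVec (dominoStates 8)
        = b 2 2 * ((a 0 0 - a 0 1 + a 1 0 - a 1 1)/2) := by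
      show star (kp (pl 0 1) (e3 2)) ⬝ᵥ (a ⊗ₖ b).mulVec (kp (mi 0 1) (e3 2)) = _
      rw [kron_inner, dot_e3, dot_plmi, mul_comm]
    have haA : b 2 2 = (((b 2 2).re : ℝ) : ℂ) := diag_real b hb 2
    have hnn : (0:ℂ) ≤ b 2 2 := by have h := hb.dotProduct_mulVec_nonneg (e3 2); rwa [dot_e3] at h
    have hQX : (0:ℂ) ≤ star (pl 0 1) ⬝ᵥ a.mulVec (pl 0 1) := ha.dotProduct_mulVec_nonneg _
    have hQY : (0:ℂ) ≤ star (mi 0 1) ⬝ᵥ a.mulVec (mi 0 1) := ha.dotProduct_mulVec_nonneg _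
    rw [dot_plpl] at hQX; rw [dot_mimi] at hQY
    have hX1 := hnz 7; rw [r11] at hX1
    have hY1 := hnz 8; rw [r22] at hY1
    have hA : 0 < (b 2 2).re := repos hnn (left_ne_zero_of_mul hX1)
    have hδle := key 7 8 (by decide)
    rw [r11, r22, r12, haA] at hδle
    rw [haA] at hX1 hY1 hnn
    exact pair_bound a ha 0 1 (by decide) _ δ hA hδ0
      (repos (mul_nonneg hnn hQX) hX1) (repos (mul_nonneg hnn hQY) hY1) hδle
  refine ⟨?_, ?_, ?_⟩
  · intro i hi
    rcases hi with rfl | rfl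
    · exact ⟨by rw [norm_sub_rev]; exact ha01, by rw [norm_sub_rev]; exact hb01⟩
    · exact ⟨ha12, hb12⟩
  · have h : a 0 0 - a 2 2 = (a 0 0 - a 1 1) + (a 1 1 - a 2 2) := by ring
    calc ‖a 0 0 - a 2 2‖ ≤ ‖a 0 0 - a 1 1‖ + ‖a 1 1 - a 2 2‖ := by
          rw [h]; exact norm_add_le _ _
      _ ≤ 2 * δ * (Matrix.trace a).re := by linarith
  · have h : b 0 0 - b 2 2 = (b 0 0 - b 1 1) + (b 1 1 - b 2 2) := by ring
    calc ‖b 0 0 - b 2 2‖ ≤ ‖b 0 0 - b 1 1‖ + ‖b 1 1 - b 2 2‖ := by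
          rw [h]; exact norm_add_le _ _
      _ ≤ 2 * δ * (Matrix.trace b).re := by linarith
end
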